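/- arXiv:2402.11974 — 2 statements merged into one kernel-verified Lean document; each statement's English description precedes it below -/
import Mathlib

section
/- Given $R_0 > 1$, the system $\mu_H N_H - \frac{b_0^{\alpha}}{N_H}\beta_V^H S \mu_V^{1-\alpha} I_V - \mu_H S = 0$, $\frac{b_0^{\alpha}}{N_H}\beta_V^H S \mu_V^{1-\alpha} I_V - \frac{\mu_H^{1-\beta}}{C^{\beta}} I_H - \mu_H I_H = 0$, $\frac{b_0^{p}}{N_H C^{p}}\beta_H^V (\frac{\Pi_V}{\mu_V} - I_V) \mu_H^{1-p} I_H - \mu_V I_V = 0$ has a unique solution with $S, I_H, I_V > 0$; if $R_0 \le 1$ the only nonnegative solution is $(N_H, 0, 0)$. -/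
/-!
Write the system as `μH N - a S I - μH S = 0`, `a S I - m H = 0`, `k (P - I) H - μV I = 0`.
Solving the first two equations for `S` and `a S I` and substituting into the third shows that
every equilibrium satisfies `a (k μH N + μV m) I² = μH (k a N P - μV m) I`. So `I = 0` or `I` is
the unique root of a linear equation, which is positive exactly when `μV m < k a N P`, i.e. when
`R₀² = k a N P / (μV m) > 1`; `I` then determines `S` and `H`.
-/

def IsHostVectorEquilibrium (a m k P μH N μV S H I : ℝ) : Prop :=
  μH * N - a * S * I - μH * S = 0 ∧ a * S * I - m * H = 0 ∧ k * (P - I) * H - μV * I = 0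

namespace IsHostVectorEquilibrium

variable {a m k P μH N μV S H I : ℝ}

theorem mul_infected_eq (h : IsHostVectorEquilibrium a m k P μH N μV S H I) (hI : I ≠ 0) :
    a * (k * μH * N + μV * m) * I = μH * (k * a * N * P - μV * m) := by
  obtain ⟨e1, e2, e3⟩ := h
  refine mul_right_cancel₀ hI ?_
  linear_combination (-((a * I + μH) * m)) * e3
    - (a * I + μH) * (k * (P - I)) * e2 - k * (P - I) * a * I * e1

theorem eq_diseaseFree (h : IsHostVectorEquilibrium a m k P μH N μV S H I)
    (ha : 0 < a) (hm : 0 < m) (hk : 0 < k) (hμH : 0 < μH) (hN : 0 < N) (hμV : 0 < μV)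
    (hI : 0 ≤ I) (hle : k * a * N * P ≤ μV * m) :
    S = N ∧ H = 0 ∧ I = 0 := by
  have hI0 : I = 0 := by
    by_contra hne
    have hlhs : 0 < a * (k * μH * N + μV * m) * I := by
      have hIpos := lt_of_le_of_ne hI (Ne.symm hne)
      positivity
    have hrhs : μH * (k * a * N * P - μV * m) ≤ 0 :=
      mul_nonpos_of_nonneg_of_nonpos hμH.le (by linarith)
    linarith [h.mul_infected_eq hne]
  obtain ⟨e1, e2, -⟩ := h
  subst hI0
  refine ⟨mul_left_cancel₀ hμH.ne' (by linear_combination -e1), ?_, rfl⟩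
  exact (mul_eq_zero.1 (by linear_combination -e2 : m * H = 0)).resolve_left hm.ne'

theorem eq_of_infected_pos {S' H' I' : ℝ} (h : IsHostVectorEquilibrium a m k P μH N μV S H I)
    (h' : IsHostVectorEquilibrium a m k P μH N μV S' H' I')
    (ha : 0 < a) (hm : 0 < m) (hk : 0 < k) (hμH : 0 < μH) (hN : 0 < N) (hμV : 0 < μV)
    (hI : 0 < I) (hI' : 0 < I') :
    S = S' ∧ H = H' ∧ I = I' := by
  have hII' : I = I' := mul_left_cancel₀ (by positivity : a * (k * μH * N + μV * m) ≠ 0)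
    ((h.mul_infected_eq hI.ne').trans (h'.mul_infected_eq hI'.ne').symm)
  subst hII'
  obtain ⟨e1, e2, -⟩ := h
  obtain ⟨e1', e2', -⟩ := h'
  have hSS' : S = S' :=
    mul_right_cancel₀ (by positivity : a * I + μH ≠ 0) (by linear_combination e1' - e1)
  subst hSS'
  exact ⟨rfl, mul_left_cancel₀ hm.ne' (by linear_combination e2' - e2), rfl⟩

end IsHostVectorEquilibrium

theorem existsUnique_pos_isHostVectorEquilibrium {a m k P μH N μV : ℝ}
    (ha : 0 < a) (hm : 0 < m) (hk : 0 < k) (hμH : 0 < μH) (hN : 0 < N) (hμV : 0 < μV)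
    (hgt : μV * m < k * a * N * P) :
    ∃! x : ℝ × ℝ × ℝ, (0 < x.1 ∧ 0 < x.2.1 ∧ 0 < x.2.2) ∧
      IsHostVectorEquilibrium a m k P μH N μV x.1 x.2.1 x.2.2 := by
  have hgt' : 0 < k * a * N * P - μV * m := by linarith
  set I := μH * (k * a * N * P - μV * m) / (a * (k * μH * N + μV * m))
  set S := μH * N / (a * I + μH)
  set H := a * S * I / m
  have hI : 0 < I := by positivity
  have hS : 0 < S := by positivity
  have hH : 0 < H := by positivity
  have hI_mul : I * (a * (k * μH * N + μV * m)) = μH * (k * a * N * P - μV * m) :=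
    div_mul_cancel₀ _ (by positivity)
  have hS_mul : S * (a * I + μH) = μH * N := div_mul_cancel₀ _ (by positivity)
  have hH_mul : H * m = a * S * I := div_mul_cancel₀ _ hm.ne'
  clear_value I S H
  have hsol : IsHostVectorEquilibrium a m k P μH N μV S H I := by
    refine ⟨by linear_combination -hS_mul, by linear_combination -hH_mul, ?_⟩
    refine mul_right_cancel₀ (by positivity : m * (a * I + μH) ≠ 0) ?_
    linear_combination k * (P - I) * (a * I + μH) * hH_mul + k * (P - I) * a * I * hS_mul
      - I * hI_mul
  refine ⟨⟨S, H, I⟩, ⟨⟨hS, hH, hI⟩, hsol⟩, ?_⟩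
  rintro ⟨S', H', I'⟩ ⟨⟨-, -, hI'⟩, h'⟩
  obtain ⟨rfl, rfl, rfl⟩ := h'.eq_of_infected_pos hsol ha hm hk hμH hN hμV hI' hI
  rfl

theorem one_lt_sqrt_div_iff {x y : ℝ} (hy : 0 < y) : 1 < √(x / y) ↔ y < x := by
  rw [Real.lt_sqrt zero_le_one, one_pow, one_lt_div hy]

theorem dengue_equations_iff (b0 βVH βHV μH μV PiV NH C α β p S IH IV : ℝ) :
    (μH * NH - b0 ^ α / NH * βVH * S * μV ^ (1 - α) * IV - μH * S = 0 ∧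
      b0 ^ α / NH * βVH * S * μV ^ (1 - α) * IV
        - μH ^ (1 - β) / C ^ β * IH - μH * IH = 0 ∧
      b0 ^ p / (NH * C ^ p) * βHV * (PiV / μV - IV) * μH ^ (1 - p) * IH
        - μV * IV = 0) ↔
    IsHostVectorEquilibrium (b0 ^ α / NH * βVH * μV ^ (1 - α)) (μH ^ (1 - β) / C ^ β + μH)
      (b0 ^ p / (NH * C ^ p) * βHV * μH ^ (1 - p)) (PiV / μV) μH NH μV S IH IV := by
  constructor <;> rintro ⟨e1, e2, e3⟩ <;>
    exact ⟨by linear_combination e1, by linear_combination e2, by linear_combination e3⟩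

theorem dengue_R0_sq_eq {b0 βVH βHV μH μV PiV NH C α β p : ℝ}
    (hb0 : 0 < b0) (hμH : 0 < μH) (hμV : 0 < μV) (hNH : 0 < NH) (hC : 0 < C) :
    PiV * b0 ^ (α + p) * βVH * βHV * C ^ β /
        (NH * C ^ p * μV ^ (1 + α) * μH ^ (p - β) * (μH ^ β * C ^ β + 1)) =
      b0 ^ p / (NH * C ^ p) * βHV * μH ^ (1 - p) * (b0 ^ α / NH * βVH * μV ^ (1 - α)) * NH *
          (PiV / μV) / (μV * (μH ^ (1 - β) / C ^ β + μH)) := by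
  rw [Real.rpow_add hb0, Real.rpow_add hμV, Real.rpow_sub hμH, Real.rpow_sub hμV,
    Real.rpow_sub hμH, Real.rpow_sub hμH, Real.rpow_one, Real.rpow_one]
  field_simp
  ring

theorem stmt_9_general (b0 βVH βHV μH μV PiV NH C α β p : ℝ)
    (hb0 : 0 < b0) (hβVH : 0 < βVH) (hβHV : 0 < βHV) (hμH : 0 < μH) (hμV : 0 < μV)
    (hNH : 0 < NH) (hC : 0 < C)
    (R0 : ℝ)
    (hR0 : R0 = Real.sqrt (PiV * b0 ^ (α + p) * βVH * βHV * C ^ β /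
        (NH * C ^ p * μV ^ (1 + α) * μH ^ (p - β) * (μH ^ β * C ^ β + 1)))) :
    (1 < R0 → ∃! x : ℝ × ℝ × ℝ,
      (0 < x.1 ∧ 0 < x.2.1 ∧ 0 < x.2.2) ∧
      μH * NH - b0 ^ α / NH * βVH * x.1 * μV ^ (1 - α) * x.2.2 - μH * x.1 = 0 ∧
      b0 ^ α / NH * βVH * x.1 * μV ^ (1 - α) * x.2.2
        - μH ^ (1 - β) / C ^ β * x.2.1 - μH * x.2.1 = 0 ∧
      b0 ^ p / (NH * C ^ p) * βHV * (PiV / μV - x.2.2) * μH ^ (1 - p) * x.2.1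
        - μV * x.2.2 = 0) ∧
    (R0 ≤ 1 → ∀ S IH IV : ℝ, 0 ≤ S → 0 ≤ IH → 0 ≤ IV →
      (μH * NH - b0 ^ α / NH * βVH * S * μV ^ (1 - α) * IV - μH * S = 0 ∧
       b0 ^ α / NH * βVH * S * μV ^ (1 - α) * IV
         - μH ^ (1 - β) / C ^ β * IH - μH * IH = 0 ∧
       b0 ^ p / (NH * C ^ p) * βHV * (PiV / μV - IV) * μH ^ (1 - p) * IH
         - μV * IV = 0) →
      S = NH ∧ IH = 0 ∧ IV = 0) := by
  rw [dengue_R0_sq_eq hb0 hμH hμV hNH hC] at hR0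
  subst hR0
  refine ⟨fun h => ?_, fun h S IH IV _ _ hIV he => ?_⟩
  · simp only [dengue_equations_iff]
    exact existsUnique_pos_isHostVectorEquilibrium (by positivity) (by positivity)
      (by positivity) hμH hNH hμV ((one_lt_sqrt_div_iff (by positivity)).1 h)
  · refine ((dengue_equations_iff ..).1 he).eq_diseaseFree (by positivity) (by positivity)
      (by positivity) hμH hNH hμV hIV (le_of_not_gt fun hgt => h.not_gt ?_)
    exact (one_lt_sqrt_div_iff (by positivity)).2 hgt

theorem stmt_9 (b0 βVH βHV μH μV PiV NH C α β p : ℝ)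
    (hb0 : 0 < b0) (hβVH : 0 < βVH) (hβHV : 0 < βHV) (hμH : 0 < μH) (hμV : 0 < μV)
    (hPiV : 0 < PiV) (hNH : 0 < NH) (hC : 0 < C)
    (hα : α ∈ Set.Ioc (0:ℝ) 1) (hβ : β ∈ Set.Ioc (0:ℝ) 1) (hp : p ∈ Set.Ioc (0:ℝ) 1)
    (R0 : ℝ)
    (hR0 : R0 = Real.sqrt (PiV * b0 ^ (α + p) * βVH * βHV * C ^ β /
        (NH * C ^ p * μV ^ (1 + α) * μH ^ (p - β) * (μH ^ β * C ^ β + 1)))) :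
    (1 < R0 → ∃! x : ℝ × ℝ × ℝ,
      (0 < x.1 ∧ 0 < x.2.1 ∧ 0 < x.2.2) ∧
      μH * NH - b0 ^ α / NH * βVH * x.1 * μV ^ (1 - α) * x.2.2 - μH * x.1 = 0 ∧
      b0 ^ α / NH * βVH * x.1 * μV ^ (1 - α) * x.2.2
        - μH ^ (1 - β) / C ^ β * x.2.1 - μH * x.2.1 = 0 ∧
      b0 ^ p / (NH * C ^ p) * βHV * (PiV / μV - x.2.2) * μH ^ (1 - p) * x.2.1
        - μV * x.2.2 = 0) ∧
    (R0 ≤ 1 → ∀ S IH IV : ℝ, 0 ≤ S → 0 ≤ IH → 0 ≤ IV →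
      (μH * NH - b0 ^ α / NH * βVH * S * μV ^ (1 - α) * IV - μH * S = 0 ∧
       b0 ^ α / NH * βVH * S * μV ^ (1 - α) * IV
         - μH ^ (1 - β) / C ^ β * IH - μH * IH = 0 ∧
       b0 ^ p / (NH * C ^ p) * βHV * (PiV / μV - IV) * μH ^ (1 - p) * IH
         - μV * IV = 0) →
      S = NH ∧ IH = 0 ∧ IV = 0) :=
  stmt_9_general b0 βVH βHV μH μV PiV NH C α β p hb0 hβVH hβHV hμH hμV hNH hC R0 hR0
end

section
/- Let $\mu > 0$, $0 < y < 1$, and let $I : [0,\infty) \to [0, \infty)$ be continuous and bounded by $N > 0$. For $K, \mu_V > 0$ define $B_2(t) = \int_0^t e^{-K(t-t_1)} \int_0^{t_1} e^{-\mu_V(t_1 - s)} I(s)\, ds\, dt_1$. If $i_0 = \limsup_{t\to\infty} I(t)$, then $\limsup_{t\to\infty} B_2(t) \le \frac{i_0}{\mu_V K}$. -/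
open Filter Topology

/-!
Write `expConv a f t = ∫₀ᵗ e^{-a(t-s)} f(s) ds`, so that `B₂ = expConv K (expConv μV I)`.
For `T ≤ t` the convolution splits as `e^{-a(t-T)} expConv a f T` plus the integral over `[T, t]`;
the first term decays to `0`, and once `f ≤ c` on `[T, ∞)` the second is at most
`c (1 - e^{-a(t-T)}) / a → c / a`. Hence `limsup f ≤ L` gives `limsup (expConv a f) ≤ L / a`;
applying this twice, first to `I` and then to the continuous function `expConv μV I`, gives the bound.
-/

noncomputable def expConv (a : ℝ) (f : ℝ → ℝ) (t : ℝ) : ℝ :=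
  ∫ s in (0:ℝ)..t, Real.exp (-a * (t - s)) * f s

namespace expConv

variable {a : ℝ} {f : ℝ → ℝ}

lemma intervalIntegrable_kernel_mul (hf : Continuous f) (t u v : ℝ) :
    IntervalIntegrable (fun s => Real.exp (-a * (t - s)) * f s) MeasureTheory.volume u v :=
  (by fun_prop : Continuous fun s => Real.exp (-a * (t - s)) * f s).intervalIntegrable u v

lemma integral_kernel (ha : a ≠ 0) (T t : ℝ) :
    ∫ s in T..t, Real.exp (-a * (t - s)) = (1 - Real.exp (-a * (t - T))) / a := by
  have hderiv : ∀ s ∈ Set.uIcc T t,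
      HasDerivAt (fun s => Real.exp (-a * (t - s)) / a) (Real.exp (-a * (t - s))) s := by
    intro s _
    have h := ((((hasDerivAt_id s).const_sub t).const_mul (-a)).exp).div_const a
    refine h.congr_deriv ?_
    simp only [id]
    field_simp
  rw [intervalIntegral.integral_eq_sub_of_hasDerivAt hderiv
    ((by fun_prop : Continuous fun s => Real.exp (-a * (t - s))).intervalIntegrable T t)]
  simp [sub_div]

lemma eq_exp_mul_add_integral (hf : Continuous f) (T t : ℝ) :
    expConv a f t = Real.exp (-a * (t - T)) * expConv a f T
      + ∫ s in T..t, Real.exp (-a * (t - s)) * f s := by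
  rw [expConv, expConv, ← intervalIntegral.integral_add_adjacent_intervals
    (intervalIntegrable_kernel_mul hf t 0 T) (intervalIntegrable_kernel_mul hf t T t),
    ← intervalIntegral.integral_const_mul]
  congr 1
  refine intervalIntegral.integral_congr fun s _ => ?_
  rw [← mul_assoc, ← Real.exp_add]
  ring_nf

lemma continuous (hf : Continuous f) : Continuous (expConv a f) := by
  have h : expConv a f = fun t => Real.exp (-a * t) * ∫ s in (0:ℝ)..t, Real.exp (a * s) * f s := by
    funext t
    rw [expConv, ← intervalIntegral.integral_const_mul]
    refine intervalIntegral.integral_congr fun s _ => ?_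
    rw [← mul_assoc, ← Real.exp_add]
    ring_nf
  rw [h]
  exact (by fun_prop : Continuous fun t => Real.exp (-a * t)).mul
    (intervalIntegral.continuous_primitive
      (fun u v => (by fun_prop : Continuous fun s => Real.exp (a * s) * f s).intervalIntegrable u v) 0)

lemma nonneg (hf : ∀ s ≥ 0, 0 ≤ f s) {t : ℝ} (ht : 0 ≤ t) : 0 ≤ expConv a f t :=
  intervalIntegral.integral_nonneg ht fun s hs => mul_nonneg (Real.exp_nonneg _) (hf s hs.1)

lemma integral_kernel_mul_le (ha : a ≠ 0) (hf : Continuous f) {T t c : ℝ} (hTt : T ≤ t)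
    (hfc : ∀ s ≥ T, f s ≤ c) :
    ∫ s in T..t, Real.exp (-a * (t - s)) * f s ≤ c * ((1 - Real.exp (-a * (t - T))) / a) := by
  calc ∫ s in T..t, Real.exp (-a * (t - s)) * f s
      ≤ ∫ s in T..t, Real.exp (-a * (t - s)) * c :=
        intervalIntegral.integral_mono_on hTt (intervalIntegrable_kernel_mul hf t T t)
          (intervalIntegrable_kernel_mul continuous_const t T t)
          fun s hs => mul_le_mul_of_nonneg_left (hfc s hs.1) (Real.exp_nonneg _)
    _ = c * ((1 - Real.exp (-a * (t - T))) / a) := by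
        rw [intervalIntegral.integral_mul_const, integral_kernel ha, mul_comm]

lemma eventually_lt_of_eventually_le (ha : 0 < a) (hf : Continuous f) {c' c : ℝ}
    (hfc : ∀ᶠ s in atTop, f s ≤ c') (hc : c' / a < c) :
    ∀ᶠ t in atTop, expConv a f t < c := by
  obtain ⟨T, hT⟩ := eventually_atTop.mp hfc
  have hdecay : Tendsto (fun t => Real.exp (-a * (t - T))) atTop (𝓝 0) :=
    Real.tendsto_exp_atBot.comp <| (tendsto_const_mul_atBot_of_neg (neg_neg_of_pos ha)).mpr
      (tendsto_atTop_add_const_right _ _ tendsto_id)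
  have hbound : Tendsto (fun t => Real.exp (-a * (t - T)) * expConv a f T
      + c' * ((1 - Real.exp (-a * (t - T))) / a)) atTop (𝓝 (c' / a)) := by
    convert (hdecay.mul_const (expConv a f T)).add
      (((tendsto_const_nhds (x := (1:ℝ))).sub hdecay).div_const a |>.const_mul c') using 2
    ring
  filter_upwards [eventually_ge_atTop T, hbound.eventually (gt_mem_nhds hc)] with t hTt hlt
  calc expConv a f t
      = Real.exp (-a * (t - T)) * expConv a f T + ∫ s in T..t, Real.exp (-a * (t - s)) * f s :=
        eq_exp_mul_add_integral hf T t
    _ ≤ Real.exp (-a * (t - T)) * expConv a f T + c' * ((1 - Real.exp (-a * (t - T))) / a) :=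
        add_le_add_right (integral_kernel_mul_le ha.ne' hf hTt hT) _
    _ < c := hlt

lemma eventually_le_of_forall_eventually_le (ha : 0 < a) (hf : Continuous f) {L : ℝ}
    (hL : ∀ c > L, ∀ᶠ s in atTop, f s ≤ c) :
    ∀ c > L / a, ∀ᶠ t in atTop, expConv a f t ≤ c := by
  intro c hc
  obtain ⟨c', hLc', hc'⟩ := exists_between ((div_lt_iff₀' ha).mp hc)
  exact (eventually_lt_of_eventually_le ha hf (hL c' hLc') ((div_lt_iff₀' ha).mpr hc')).mono
    fun _ h => h.le

end expConv

theorem stmt_15_general (K μV N : ℝ) (hK : 0 < K) (hμV : 0 < μV)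
    (I : ℝ → ℝ) (hIcont : Continuous I) (hInonneg : ∀ t ≥ (0:ℝ), 0 ≤ I t)
    (hIbdd : ∀ t ≥ (0:ℝ), I t ≤ N)
    (i0 : ℝ) (hi0 : i0 = limsup I atTop)
    (B₂ : ℝ → ℝ)
    (hB₂ : ∀ t : ℝ, B₂ t = ∫ t₁ in (0:ℝ)..t, Real.exp (-K * (t - t₁)) *
        ∫ s in (0:ℝ)..t₁, Real.exp (-μV * (t₁ - s)) * I s) :
    limsup B₂ atTop ≤ i0 / (μV * K) := by
  have hB : B₂ = expConv K (expConv μV I) := funext hB₂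
  have hIbddUnder : IsBoundedUnder (· ≤ ·) atTop I :=
    isBoundedUnder_of_eventually_le ((eventually_ge_atTop 0).mono hIbdd)
  have hI : ∀ c > i0, ∀ᶠ s in atTop, I s ≤ c := fun c hc =>
    (eventually_lt_of_limsup_lt (hi0 ▸ hc) hIbddUnder).mono fun _ h => h.le
  have hJ := expConv.eventually_le_of_forall_eventually_le hμV hIcont hI
  have hBle := expConv.eventually_le_of_forall_eventually_le hK (expConv.continuous hIcont) hJ
  have hB_nonneg : ∀ t ≥ (0:ℝ), 0 ≤ B₂ t := fun t ht =>
    hB ▸ expConv.nonneg (fun _ hs => expConv.nonneg hInonneg hs) ht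
  have hcobdd : IsCoboundedUnder (· ≤ ·) atTop B₂ :=
    isCoboundedUnder_le_of_eventually_le atTop ((eventually_ge_atTop 0).mono hB_nonneg)
  rw [← div_div]
  exact le_of_forall_gt_imp_ge_of_dense fun c hc => limsup_le_of_le hcobdd (hB ▸ hBle c hc)

theorem stmt_15 (μ K μV N : ℝ) (hμ : 0 < μ) (hK : 0 < K) (hμV : 0 < μV) (hN : 0 < N)
    (y : ℝ) (hy0 : 0 < y) (hy1 : y < 1)
    (I : ℝ → ℝ) (hIcont : Continuous I) (hInonneg : ∀ t ≥ (0:ℝ), 0 ≤ I t)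
    (hIbdd : ∀ t ≥ (0:ℝ), I t ≤ N)
    (i0 : ℝ) (hi0 : i0 = limsup I atTop)
    (B₂ : ℝ → ℝ)
    (hB₂ : ∀ t : ℝ, B₂ t = ∫ t₁ in (0:ℝ)..t, Real.exp (-K * (t - t₁)) *
        ∫ s in (0:ℝ)..t₁, Real.exp (-μV * (t₁ - s)) * I s) :
    limsup B₂ atTop ≤ i0 / (μV * K) :=
  stmt_15_general K μV N hK hμV I hIcont hInonneg hIbdd i0 hi0 B₂ hB₂
end
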